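/- arXiv:1208.2126 — 2 statements merged into one kernel-verified Lean document; each statement's English description precedes it below -/
import Mathlib

section
/- Every linear anti-symplectic involution S on ℝ^{2n} is conjugate to the standard involution R by a symplectic matrix: there exists ψ ∈ Sp(n) with ψ⁻¹Rψ = S. -/
/-!
The eigenspaces `E₊, E₋` of `S` for `±1` are complementary, and both are isotropic since
`ω(v, w) = -ω(Sv, Sw) = -μ² ω(v, w)` for eigenvectors of the same eigenvalue `μ`.
Hence `ω` pairs `E₋` injectively into the dual of `E₊` and vice versa, so both are Lagrangian
and every basis `eᵢ` of `E₊` has an `ω`-dual family `fⱼ` in `E₋`. The matrix `φ` with columns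
`(eᵢ, fⱼ)` is symplectic and satisfies `S φ = φ R`, so `ψ = φ⁻¹` works.
-/

open Matrix

noncomputable section

/-- The standard symplectic structure matrix on `ℝ^{2n} = ℝ^n ⊕ ℝ^n`. -/
def J (n : ℕ) : Matrix (Fin n ⊕ Fin n) (Fin n ⊕ Fin n) ℝ :=
  Matrix.fromBlocks 0 1 (-1) 0

/-- The standard symplectic form `ω(v,w) = ⟨v, J w⟩`. -/
def symForm (n : ℕ) (v w : Fin n ⊕ Fin n → ℝ) : ℝ :=
  v ⬝ᵥ (J n).mulVec w

/-- A matrix is symplectic if it preserves `ω`. -/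
def IsSymplectic (n : ℕ) (ψ : Matrix (Fin n ⊕ Fin n) (Fin n ⊕ Fin n) ℝ) : Prop :=
  ∀ v w, symForm n (ψ.mulVec v) (ψ.mulVec w) = symForm n v w

/-- A linear anti-symplectic involution: `S² = 1` and `ω(Sv,Sw) = -ω(v,w)`. -/
def IsAntiSympInv (n : ℕ) (S : Matrix (Fin n ⊕ Fin n) (Fin n ⊕ Fin n) ℝ) : Prop :=
  S * S = 1 ∧ ∀ v w, symForm n (S.mulVec v) (S.mulVec w) = - symForm n v w

/-- The standard anti-symplectic involution `R = diag(1,-1)`. -/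
def Rmat (n : ℕ) : Matrix (Fin n ⊕ Fin n) (Fin n ⊕ Fin n) ℝ :=
  Matrix.fromBlocks 1 0 0 (-1)

/-- A Lagrangian subspace: `n`-dimensional and `ω` vanishes on it. -/
def IsLagrangian (n : ℕ) (L : Submodule ℝ (Fin n ⊕ Fin n → ℝ)) : Prop :=
  Module.finrank ℝ L = n ∧ ∀ v ∈ L, ∀ w ∈ L, symForm n v w = 0

open Module Module.End

lemma J_eq_neg_J (n : ℕ) : J n = -Matrix.J (Fin n) ℝ := by
  ext (i|i) (j|j) <;> simp [_root_.J, Matrix.J]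

lemma symForm_swap (n : ℕ) (v w : Fin n ⊕ Fin n → ℝ) : symForm n v w = -symForm n w v := by
  rw [symForm, symForm, dotProduct_mulVec, dotProduct_comm, ← mulVec_transpose, J_eq_neg_J,
    transpose_neg, Matrix.J_transpose, neg_neg, neg_mulVec, dotProduct_neg, neg_neg]

lemma eq_zero_of_forall_symForm_eq_zero {n : ℕ} {w : Fin n ⊕ Fin n → ℝ}
    (h : ∀ v, symForm n v w = 0) : w = 0 := by
  have hJw : J n *ᵥ w = 0 := dotProduct_self_eq_zero.1 (h _)
  have := congrArg (J n *ᵥ ·) hJw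
  rwa [mulVec_mulVec, J_eq_neg_J, neg_mul_neg, Matrix.J_squared, neg_mulVec, one_mulVec,
    mulVec_zero, neg_eq_zero] at this

lemma symForm_mulVec_mulVec (n : ℕ) (A : Matrix (Fin n ⊕ Fin n) (Fin n ⊕ Fin n) ℝ)
    (v w : Fin n ⊕ Fin n → ℝ) : symForm n (A *ᵥ v) (A *ᵥ w) = v ⬝ᵥ (Aᵀ * J n * A) *ᵥ w := by
  rw [symForm, mulVec_mulVec, dotProduct_mulVec, ← vecMul_transpose, vecMul_vecMul,
    ← dotProduct_mulVec, Matrix.mul_assoc]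

lemma isSymplectic_of_mem_symplecticGroup {n : ℕ} {A : Matrix (Fin n ⊕ Fin n) (Fin n ⊕ Fin n) ℝ}
    (hA : A ∈ symplecticGroup (Fin n) ℝ) : IsSymplectic n A := by
  intro v w
  rw [symForm_mulVec_mulVec, J_eq_neg_J, Matrix.mul_neg, Matrix.neg_mul,
    SymplecticGroup.mem_iff'.1 hA, ← J_eq_neg_J, symForm]

lemma mem_symplecticGroup_of_symForm_col {n : ℕ} {A : Matrix (Fin n ⊕ Fin n) (Fin n ⊕ Fin n) ℝ}
    (h : ∀ c d, symForm n (A.col c) (A.col d) = J n c d) : A ∈ symplecticGroup (Fin n) ℝ := by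
  have hJ : Aᵀ * J n * A = J n := by
    ext c d
    have hcd := h c d
    rw [← mulVec_single_one, ← mulVec_single_one, symForm_mulVec_mulVec] at hcd
    simpa using hcd
  rw [SymplecticGroup.mem_iff']
  simpa [J_eq_neg_J] using hJ

def IsIsotropic (n : ℕ) (L : Submodule ℝ (Fin n ⊕ Fin n → ℝ)) : Prop :=
  ∀ v ∈ L, ∀ w ∈ L, symForm n v w = 0

section Splitting

variable {n : ℕ} {V W : Submodule ℝ (Fin n ⊕ Fin n → ℝ)}

variable (V W) in
def symPairing : W →ₗ[ℝ] Dual ℝ V :=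
  V.subtype.dualMap ∘ₗ (toLinearMap₂' ℝ (J n)).flip ∘ₗ W.subtype

@[simp]
lemma symPairing_apply (w : W) (v : V) : symPairing V W w v = symForm n v w := by
  simp [symPairing, symForm, toLinearMap₂'_apply']

lemma symPairing_injective (hW : IsIsotropic n W) (hVW : V ⊔ W = ⊤) :
    Function.Injective (symPairing V W) := by
  refine (injective_iff_map_eq_zero _).2 fun w hw => Subtype.ext <|
    eq_zero_of_forall_symForm_eq_zero fun x => ?_
  obtain ⟨v, hv, w', hw', rfl⟩ := Submodule.mem_sup.1 (hVW ▸ Submodule.mem_top : x ∈ V ⊔ W)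
  have hvw : symForm n v w = 0 := by simpa using LinearMap.congr_fun hw ⟨v, hv⟩
  rw [symForm, add_dotProduct, ← symForm, ← symForm, hvw, hW w' hw' w w.2, add_zero]

lemma IsIsotropic.isLagrangian_of_isCompl (hV : IsIsotropic n V) (hW : IsIsotropic n W)
    (h : IsCompl V W) : IsLagrangian n V := by
  have hVW := (LinearMap.finrank_le_finrank_of_injective
    (symPairing_injective hW h.sup_eq_top)).trans_eq Subspace.dual_finrank_eq
  have hWV := (LinearMap.finrank_le_finrank_of_injective
    (symPairing_injective hV h.symm.sup_eq_top)).trans_eq Subspace.dual_finrank_eq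
  have hsum := Submodule.finrank_add_eq_of_isCompl h
  simp only [finrank_pi, Fintype.card_sum, Fintype.card_fin] at hsum
  exact ⟨by omega, hV⟩

lemma exists_symForm_eq_of_isCompl (hV : IsIsotropic n V) (hW : IsIsotropic n W)
    (h : IsCompl V W) (f : Dual ℝ V) : ∃ w : W, ∀ v : V, symForm n v w = f v := by
  have hrank : finrank ℝ W = finrank ℝ (Dual ℝ V) := by
    rw [Subspace.dual_finrank_eq, (hV.isLagrangian_of_isCompl hW h).1,
      (hW.isLagrangian_of_isCompl hV h.symm).1]
  obtain ⟨w, rfl⟩ := (LinearMap.injective_iff_surjective_of_finrank_eq_finrank hrank).1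
    (symPairing_injective hW h.sup_eq_top) f
  exact ⟨w, fun v => (symPairing_apply w v).symm⟩

end Splitting

lemma exists_mem_symplecticGroup_col_mem {n : ℕ} {V W : Submodule ℝ (Fin n ⊕ Fin n → ℝ)}
    (hV : IsIsotropic n V) (hW : IsIsotropic n W) (h : IsCompl V W) :
    ∃ φ ∈ symplecticGroup (Fin n) ℝ, (∀ i, φ.col (.inl i) ∈ V) ∧ ∀ i, φ.col (.inr i) ∈ W := by
  let b := finBasisOfFinrankEq ℝ V (hV.isLagrangian_of_isCompl hW h).1
  choose w hw using fun j => exists_symForm_eq_of_isCompl hV hW h (b.coord j)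
  have hbw : ∀ i j, symForm n (b i) (w j) = if i = j then 1 else 0 := fun i j => by
    rw [hw, Basis.coord_apply, Basis.repr_self, Finsupp.single_apply]
  let φ := (Matrix.of (Sum.elim (fun i => (b i : Fin n ⊕ Fin n → ℝ)) fun j => w j))ᵀ
  refine ⟨φ, mem_symplecticGroup_of_symForm_col ?_, fun i => (b i).2, fun j => (w j).2⟩
  rintro (i | i) (j | j)
  · simpa [φ, _root_.J] using hV _ (b i).2 _ (b j).2
  · simpa [φ, _root_.J, Matrix.one_apply] using hbw i j
  · simpa [φ, _root_.J, symForm_swap n (w i), Matrix.one_apply, eq_comm] using hbw j i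
  · simpa [φ, _root_.J] using hW _ (w i).2 _ (w j).2

section Involution

variable {n : ℕ} {S : Matrix (Fin n ⊕ Fin n) (Fin n ⊕ Fin n) ℝ}

lemma IsAntiSympInv.isIsotropic_eigenspace (hS : IsAntiSympInv n S) {μ : ℝ} (hμ : μ * μ = 1) :
    IsIsotropic n (eigenspace (toLin' S) μ) := by
  intro v hv w hw
  have h := hS.2 v w
  rw [← toLin'_apply, ← toLin'_apply, mem_eigenspace_iff.1 hv, mem_eigenspace_iff.1 hw, symForm,
    mulVec_smul, dotProduct_smul, smul_dotProduct, smul_smul, hμ, one_smul, ← symForm] at h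
  linarith

lemma isCompl_eigenspace_one_neg_one (hS : S * S = 1) :
    IsCompl (eigenspace (toLin' S) 1) (eigenspace (toLin' S) (-1)) := by
  have hSS : ∀ x, S *ᵥ S *ᵥ x = x := fun x => by rw [mulVec_mulVec, hS, one_mulVec]
  refine ⟨Submodule.disjoint_def.2 fun x hp hm => ?_,
    Submodule.codisjoint_iff_exists_add_eq.2 fun x => ?_⟩
  · have h := (mem_eigenspace_iff.1 hp).symm.trans (mem_eigenspace_iff.1 hm)
    rw [one_smul, neg_one_smul, eq_neg_iff_add_eq_zero, ← two_smul ℝ, smul_eq_zero] at h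
    exact h.resolve_left two_ne_zero
  · refine ⟨(2⁻¹ : ℝ) • (x + S *ᵥ x), (2⁻¹ : ℝ) • (x - S *ᵥ x), ?_, ?_, by module⟩
    · rw [mem_eigenspace_iff, toLin'_apply, mulVec_smul, mulVec_add, hSS]; module
    · rw [mem_eigenspace_iff, toLin'_apply, mulVec_smul, mulVec_sub, hSS]; module

lemma mul_eq_mul_Rmat_of_col {φ : Matrix (Fin n ⊕ Fin n) (Fin n ⊕ Fin n) ℝ}
    (hV : ∀ i, S *ᵥ φ.col (.inl i) = φ.col (.inl i))
    (hW : ∀ i, S *ᵥ φ.col (.inr i) = -φ.col (.inr i)) : S * φ = φ * Rmat n := by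
  have hR : Rmat n = diagonal (Sum.elim 1 (-1)) := by
    rw [Rmat, ← fromBlocks_diagonal, diagonal_one', ← diagonal_one', diagonal_neg]; rfl
  refine ext_of_mulVec_single fun c => ?_
  rw [← mulVec_mulVec, ← mulVec_mulVec, hR, diagonal_mulVec_single, mulVec_single_one]
  rcases c with i | i
  · simp [hV]
  · simp [hW, Pi.single_neg, mulVec_neg]

end Involution

theorem stmt6 (n : ℕ) (S : Matrix (Fin n ⊕ Fin n) (Fin n ⊕ Fin n) ℝ)
    (hS : IsAntiSympInv n S) :
    ∃ ψ : Matrix (Fin n ⊕ Fin n) (Fin n ⊕ Fin n) ℝ,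
      IsSymplectic n ψ ∧ ψ⁻¹ * Rmat n * ψ = S := by
  obtain ⟨φ, hφ, hV, hW⟩ := exists_mem_symplecticGroup_col_mem
    (hS.isIsotropic_eigenspace (one_mul 1)) (hS.isIsotropic_eigenspace (by norm_num))
    (isCompl_eigenspace_one_neg_one hS.1)
  have hSφ : S * φ = φ * Rmat n := mul_eq_mul_Rmat_of_col
    (fun i => by simpa using mem_eigenspace_iff.1 (hV i))
    (fun i => by simpa using mem_eigenspace_iff.1 (hW i))
  have hdet := SymplecticGroup.symplectic_det hφ
  refine ⟨φ⁻¹, isSymplectic_of_mem_symplecticGroup ?_, ?_⟩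
  · simpa only [SymplecticGroup.coe_inv'] using (⟨φ, hφ⟩⁻¹ : symplecticGroup (Fin n) ℝ).2
  · rw [nonsing_inv_nonsing_inv φ hdet, ← hSφ, Matrix.mul_assoc, mul_nonsing_inv φ hdet, mul_one]
end
end

section
/- For a fixed Lagrangian subspace L ⊆ ℝ^{2n}, the set of anti-symplectic involutions S with Fix(S) = L is in bijection with the set of Lagrangian complements of L, via S ↦ ker(S + 1). -/
open Matrix

noncomputable section

/-
An involution `S` is the reflection `a + b ↦ a - b` of the splitting `ker (S - 1) ⊕ ker (S + 1)`,
and every splitting arises this way from exactly one involution. On `ker (S + 1)` an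
anti-symplectic `S` gives `ω(v, w) = ω(Sv, Sw) = -ω(v, w)`, so this eigenspace is isotropic;
conversely, if both summands are isotropic then `ω(a - b, c - d) = -ω(a + b, c + d)`, so the
reflection is anti-symplectic. A complement of a Lagrangian subspace of `ℝ^{2n}` has dimension
`n`, so its isotropic complements are exactly its Lagrangian complements.
-/

open LinearMap Submodule

lemma eq_zero_of_eq_neg {V : Type*} [AddCommGroup V] (K : Type*) [Field K] [NeZero (2 : K)]
    [Module K V] {v : V} (h : v = -v) : v = 0 := by
  have h2 : (2 : K) • v = 0 := by rw [two_smul]; nth_rewrite 2 [h]; exact add_neg_cancel v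
  exact (smul_eq_zero.1 h2).resolve_left two_ne_zero

section Involution

variable {K V : Type*} [Field K] [AddCommGroup V] [Module K V]

lemma mem_ker_sub_one_iff {f : Module.End K V} {v : V} : v ∈ ker (f - 1) ↔ f v = v := by
  rw [mem_ker, LinearMap.sub_apply, Module.End.one_apply, sub_eq_zero]

lemma mem_ker_add_one_iff {f : Module.End K V} {v : V} : v ∈ ker (f + 1) ↔ f v = -v := by
  rw [mem_ker, LinearMap.add_apply, Module.End.one_apply, add_eq_zero_iff_eq_neg]

variable [NeZero (2 : K)]

lemma isCompl_ker_sub_one_ker_add_one {f : Module.End K V} (hf : f * f = 1) :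
    IsCompl (ker (f - 1)) (ker (f + 1)) := by
  have hff (v : V) : f (f v) = v := congr($hf v)
  refine ⟨disjoint_def.2 fun v h₁ h₂ => ?_, codisjoint_iff.2 (eq_top_iff.2 fun v _ => ?_)⟩
  · rw [mem_ker_sub_one_iff] at h₁
    rw [mem_ker_add_one_iff, h₁] at h₂
    exact eq_zero_of_eq_neg K h₂
  · have hv : v = (2⁻¹ : K) • (v + f v) + (2⁻¹ : K) • (v - f v) := by
      rw [← smul_add, add_add_sub_cancel, ← two_smul K, smul_smul, inv_mul_cancel₀ two_ne_zero,
        one_smul]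
    rw [hv]
    refine add_mem_sup ?_ ?_
    · rw [mem_ker_sub_one_iff, map_smul, map_add, hff, add_comm]
    · rw [mem_ker_add_one_iff, map_smul, map_sub, hff, ← smul_neg, neg_sub]

lemma eq_of_ker_sub_one_eq_of_ker_add_one_eq {f g : Module.End K V} (hf : f * f = 1)
    (h₁ : ker (f - 1) = ker (g - 1)) (h₂ : ker (f + 1) = ker (g + 1)) : f = g := by
  refine ext_on_codisjoint (isCompl_ker_sub_one_ker_add_one hf).codisjoint
    (fun v hv => ?_) (fun v hv => ?_)
  · have hv' : v ∈ ker (g - 1) := h₁ ▸ hv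
    rw [SetLike.mem_coe, mem_ker_sub_one_iff] at hv
    rw [mem_ker_sub_one_iff] at hv'
    rw [hv, hv']
  · have hv' : v ∈ ker (g + 1) := h₂ ▸ hv
    rw [SetLike.mem_coe, mem_ker_add_one_iff] at hv
    rw [mem_ker_add_one_iff] at hv'
    rw [hv, hv']

end Involution

namespace Submodule

section Ring

variable {R V : Type*} [Ring R] [AddCommGroup V] [Module R V] {p q : Submodule R V}

noncomputable def reflectionAlong (p q : Submodule R V) (h : IsCompl p q) : Module.End R V :=
  p.projection q h - q.projection p h.symm

variable (h : IsCompl p q)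

lemma reflectionAlong_apply (v : V) :
    p.reflectionAlong q h v = p.projection q h v - q.projection p h.symm v := rfl

lemma reflectionAlong_symm : q.reflectionAlong p h.symm = -p.reflectionAlong q h :=
  (neg_sub _ _).symm

lemma reflectionAlong_mul_self : p.reflectionAlong q h * p.reflectionAlong q h = 1 := by
  ext v
  simp only [Module.End.mul_apply, Module.End.one_apply, reflectionAlong_apply, map_sub,
    projection_apply_of_mem_left h (projection_apply_mem h v),
    projection_apply_of_mem_right h (projection_apply_mem h.symm v),
    projection_apply_of_mem_left h.symm (projection_apply_mem h.symm v),
    projection_apply_of_mem_right h.symm (projection_apply_mem h v), sub_zero, zero_sub,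
    sub_neg_eq_add, projection_add_projection_eq_self]

end Ring

variable {K V : Type*} [Field K] [NeZero (2 : K)] [AddCommGroup V] [Module K V]
  {p q : Submodule K V} (h : IsCompl p q)

lemma ker_reflectionAlong_sub_one : ker (p.reflectionAlong q h - 1) = p := by
  ext v
  rw [mem_ker_sub_one_iff, reflectionAlong_apply, ← projection_apply_eq_zero_iff h.symm]
  nth_rewrite 3 [← projection_add_projection_eq_self h v]
  constructor
  · intro hv
    rw [sub_eq_add_neg] at hv
    exact eq_zero_of_eq_neg K (add_left_cancel hv).symm
  · intro hv
    rw [hv, sub_zero, add_zero]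

lemma ker_reflectionAlong_add_one : ker (p.reflectionAlong q h + 1) = q := by
  have h' := ker_reflectionAlong_sub_one h.symm
  rwa [reflectionAlong_symm, ← neg_add', ker_neg] at h'

end Submodule

namespace LinearMap.BilinForm

section CommRing

variable {R M : Type*} [CommRing R] [AddCommGroup M] [Module R M] (B : LinearMap.BilinForm R M)

def IsTotallyIsotropic (W : Submodule R M) : Prop := ∀ v ∈ W, ∀ w ∈ W, B v w = 0

def IsAntiIsometry (f : Module.End R M) : Prop := ∀ v w, B (f v) (f w) = -B v w

lemma isAntiIsometry_reflectionAlong {p q : Submodule R M} (h : IsCompl p q)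
    (hp : B.IsTotallyIsotropic p) (hq : B.IsTotallyIsotropic q) :
    B.IsAntiIsometry (p.reflectionAlong q h) := by
  intro v w
  have hac := hp _ (projection_apply_mem h v) _ (projection_apply_mem h w)
  have hbd := hq _ (projection_apply_mem h.symm v) _ (projection_apply_mem h.symm w)
  conv_rhs => rw [← projection_add_projection_eq_self h v, ← projection_add_projection_eq_self h w]
  simp only [reflectionAlong_apply, map_sub, map_add, LinearMap.sub_apply,
    LinearMap.add_apply, hac, hbd]
  ring

end CommRing

variable {K V : Type*} [Field K] [NeZero (2 : K)] [AddCommGroup V] [Module K V]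
  {B : LinearMap.BilinForm K V}

lemma IsAntiIsometry.isTotallyIsotropic_ker_add_one {f : Module.End K V}
    (hf : B.IsAntiIsometry f) : B.IsTotallyIsotropic (ker (f + 1)) := by
  intro v hv w hw
  have h := hf v w
  rw [mem_ker_add_one_iff.1 hv, mem_ker_add_one_iff.1 hw] at h
  simp only [map_neg, LinearMap.neg_apply, neg_neg] at h
  exact eq_zero_of_eq_neg K h

theorem bijOn_ker_add_one {L : Submodule K V} (hL : B.IsTotallyIsotropic L) :
    Set.BijOn (fun f : Module.End K V => ker (f + 1))
      {f | f * f = 1 ∧ B.IsAntiIsometry f ∧ ker (f - 1) = L}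
      {L' | B.IsTotallyIsotropic L' ∧ IsCompl L L'} := by
  refine ⟨?_, ?_, ?_⟩
  · rintro f ⟨hf, hB, rfl⟩
    exact ⟨hB.isTotallyIsotropic_ker_add_one, isCompl_ker_sub_one_ker_add_one hf⟩
  · rintro f ⟨hf, -, rfl⟩ g ⟨-, -, hg⟩ hfg
    exact eq_of_ker_sub_one_eq_of_ker_add_one_eq hf hg.symm hfg
  · rintro L' ⟨hL', h⟩
    exact ⟨L.reflectionAlong L' h, ⟨reflectionAlong_mul_self h,
      isAntiIsometry_reflectionAlong B h hL hL', ker_reflectionAlong_sub_one h⟩,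
      ker_reflectionAlong_add_one h⟩

end LinearMap.BilinForm

lemma symForm_eq_toBilin' (n : ℕ) (v w : Fin n ⊕ Fin n → ℝ) :
    symForm n v w = Matrix.toBilin' (J n) v w :=
  (Matrix.toBilin'_apply' _ _ _).symm

lemma isAntiSympInv_iff (n : ℕ) (S : Matrix (Fin n ⊕ Fin n) (Fin n ⊕ Fin n) ℝ) :
    IsAntiSympInv n S ↔ Matrix.toLinAlgEquiv' S * Matrix.toLinAlgEquiv' S = 1 ∧
      (Matrix.toBilin' (J n)).IsAntiIsometry (Matrix.toLinAlgEquiv' S) := by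
  rw [← map_mul, ← map_one Matrix.toLinAlgEquiv', Matrix.toLinAlgEquiv'.injective.eq_iff]
  simp only [IsAntiSympInv, BilinForm.IsAntiIsometry, symForm_eq_toBilin',
    Matrix.toLinAlgEquiv'_apply]

lemma IsLagrangian.isTotallyIsotropic {n : ℕ} {L : Submodule ℝ (Fin n ⊕ Fin n → ℝ)}
    (hL : IsLagrangian n L) : (Matrix.toBilin' (J n)).IsTotallyIsotropic L := by
  simpa only [BilinForm.IsTotallyIsotropic, symForm_eq_toBilin'] using hL.2

lemma isLagrangian_iff_of_isCompl {n : ℕ} {L L' : Submodule ℝ (Fin n ⊕ Fin n → ℝ)}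
    (hL : IsLagrangian n L) (h : IsCompl L L') :
    IsLagrangian n L' ↔ (Matrix.toBilin' (J n)).IsTotallyIsotropic L' := by
  have hdim := Submodule.finrank_add_eq_of_isCompl h
  simp only [Module.finrank_pi, Fintype.card_sum, Fintype.card_fin, hL.1] at hdim
  simp only [IsLagrangian, BilinForm.IsTotallyIsotropic, symForm_eq_toBilin']
  exact and_iff_right (by omega)

theorem stmt13 (n : ℕ) (L : Submodule ℝ (Fin n ⊕ Fin n → ℝ))
    (hL : IsLagrangian n L) :
    Set.BijOn (fun S : Matrix (Fin n ⊕ Fin n) (Fin n ⊕ Fin n) ℝ =>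
        LinearMap.ker (S + 1).mulVecLin)
      {S | IsAntiSympInv n S ∧ LinearMap.ker (S - 1).mulVecLin = L}
      {L' | IsLagrangian n L' ∧ IsCompl L L'} := by
  let e : Matrix (Fin n ⊕ Fin n) (Fin n ⊕ Fin n) ℝ ≃ₐ[ℝ] Module.End ℝ (Fin n ⊕ Fin n → ℝ) :=
    Matrix.toLinAlgEquiv'
  have he (S : Matrix (Fin n ⊕ Fin n) (Fin n ⊕ Fin n) ℝ) : S.mulVecLin = e S := rfl
  have hsrc : {S | IsAntiSympInv n S ∧ ker (S - 1).mulVecLin = L} =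
      e ⁻¹' {f | f * f = 1 ∧ (Matrix.toBilin' (J n)).IsAntiIsometry f ∧ ker (f - 1) = L} := by
    ext S
    simp only [Set.mem_ofPred_eq, Set.mem_preimage, isAntiSympInv_iff, he, map_sub, map_one,
      and_assoc]
    exact Iff.rfl
  have htgt : {L' | IsLagrangian n L' ∧ IsCompl L L'} =
      {L' | (Matrix.toBilin' (J n)).IsTotallyIsotropic L' ∧ IsCompl L L'} :=
    Set.ext fun L' => and_congr_left (isLagrangian_iff_of_isCompl hL)
  rw [hsrc, htgt]
  refine ((BilinForm.bijOn_ker_add_one hL.isTotallyIsotropic).comp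
    e.bijective.bijOn_preimage).congr fun S _ => ?_
  simp only [Function.comp_apply, he, map_add, map_one]
end
end
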